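/- arXiv:2404.15374 — 3 statements merged into one kernel-verified Lean document; each statement's English description precedes it below -/
import Mathlib

section
/- Suppose ν ≥ 2, let F̃ be an integer with 1 ≤ F̃ ≤ N_b − 1, and suppose the vector ε̄ is nonincreasing and there is a real c > 0 with ε̄_n = c for every n with F̃ ≤ n ≤ N_b − 1. Then the simplified log-likelihood is constant beyond F̃: for every integer F with F̃ < F ≤ N_b − 1 one has L̂L_F = L̂L_{F−1}; consequently L̂L_F = L̂L_{F̃} for all F with F̃ ≤ F ≤ N_b − 1. -/
open Finset

/-- Estimated noise power `ψ²_F = (1/(N−F)) · Σ_{n=F}^{N−1} ε̄_n`. -/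
noncomputable def psiSq (N : ℕ) (ε : ℕ → ℝ) (F : ℕ) : ℝ :=
  (1 / ((N : ℝ) - (F : ℝ))) * ∑ n ∈ Finset.Ico F N, ε n

/-- Estimated signal power `λ_n^{(F)} = ε̄_n − ψ²_F`. -/
noncomputable def lamSig (N : ℕ) (ε : ℕ → ℝ) (F n : ℕ) : ℝ :=
  ε n - psiSq N ε F

/-- Matched scale parameter `η²_{F,n}`. -/
noncomputable def etaSq (N : ℕ) (ε : ℕ → ℝ) (ν : ℝ) (F n : ℕ) : ℝ :=
  Real.sqrt ((2 * ν * (psiSq N ε F) ^ 2 + 4 * (psiSq N ε F) * lamSig N ε F n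
    + (ν * psiSq N ε F + lamSig N ε F n) ^ 2) / (ν * (2 + ν)))

/-- Simplified log-likelihood `L̂L_F`. -/
noncomputable def LLhat (N : ℕ) (ε : ℕ → ℝ) (ν : ℝ) (F : ℕ) : ℝ :=
  (∑ n ∈ Finset.range F,
      (-(ν / 2) * Real.log (2 * etaSq N ε ν F n) - ε n / (2 * etaSq N ε ν F n)))
  + ∑ n ∈ Finset.Ico F N,
      (-(ν / 2) * Real.log (2 * psiSq N ε F) - ε n / (2 * psiSq N ε F))

/- Where `ε̄` is constantly `c` from `F̃` on, every noise estimate `ψ²_F` with `F ≥ F̃` equals `c`.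
Moving the boundary from `F` to `F + 1` then turns the noise term of index `F` into a signal term
with `λ_F^{(F+1)} = 0`, whose matched scale is `η² = ψ² = c`; since the other scales only depend
on `ψ²`, the two log-likelihoods agree term by term. -/

theorem psiSq_eq_of_eqOn_Ico {N F : ℕ} {ε : ℕ → ℝ} {c : ℝ} (hF : F < N)
    (h : ∀ n ∈ Ico F N, ε n = c) : psiSq N ε F = c := by
  have hNF : (N : ℝ) - F ≠ 0 := sub_ne_zero.mpr (by exact_mod_cast hF.ne')
  rw [psiSq, sum_congr rfl h, sum_const, Nat.card_Ico, nsmul_eq_mul, Nat.cast_sub hF.le]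
  field_simp

theorem etaSq_congr_of_psiSq_eq {N : ℕ} {ε : ℕ → ℝ} {ν : ℝ} {F G : ℕ} (n : ℕ)
    (h : psiSq N ε F = psiSq N ε G) : etaSq N ε ν F n = etaSq N ε ν G n := by
  simp only [etaSq, lamSig, h]

theorem etaSq_eq_abs_psiSq_of_lamSig_eq_zero {N : ℕ} {ε : ℕ → ℝ} {ν : ℝ} {F n : ℕ}
    (hν : ν * (2 + ν) ≠ 0) (h : lamSig N ε F n = 0) :
    etaSq N ε ν F n = |psiSq N ε F| := by
  have hrad : (2 * ν * psiSq N ε F ^ 2 + 4 * psiSq N ε F * 0 + (ν * psiSq N ε F + 0) ^ 2)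
      / (ν * (2 + ν)) = psiSq N ε F ^ 2 := by
    rw [div_eq_iff hν]
    ring
  rw [etaSq, h, hrad, Real.sqrt_sq_eq_abs]

theorem LLhat_succ_eq_of_eq_psiSq {N F : ℕ} {ε : ℕ → ℝ} {ν : ℝ} (hF : F < N)
    (hν : ν * (2 + ν) ≠ 0) (hψ : psiSq N ε (F + 1) = psiSq N ε F)
    (hψ0 : 0 ≤ psiSq N ε F) (hεF : ε F = psiSq N ε F) :
    LLhat N ε ν (F + 1) = LLhat N ε ν F := by
  have hηF : etaSq N ε ν (F + 1) F = psiSq N ε F := by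
    rw [etaSq_eq_abs_psiSq_of_lamSig_eq_zero hν (by rw [lamSig, hψ, hεF, sub_self]), hψ,
      abs_of_nonneg hψ0]
  have hη : ∀ n, etaSq N ε ν (F + 1) n = etaSq N ε ν F n :=
    fun n => etaSq_congr_of_psiSq_eq n hψ
  rw [LLhat, LLhat, sum_range_succ, sum_eq_sum_Ico_succ_bot hF, hηF, hψ]
  simp only [hη]
  ring

theorem LLhat_constant_beyond_Ftilde_general
    (Nb : ℕ) (ν : ℝ) (hν : 2 ≤ ν)
    (ε : ℕ → ℝ)
    (Ft : ℕ)
    (c : ℝ) (hc : 0 < c) (hconst : ∀ n : ℕ, Ft ≤ n → n ≤ Nb - 1 → ε n = c) :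
    (∀ F : ℕ, Ft < F → F ≤ Nb - 1 → LLhat Nb ε ν F = LLhat Nb ε ν (F - 1)) ∧
    (∀ F : ℕ, Ft ≤ F → F ≤ Nb - 1 → LLhat Nb ε ν F = LLhat Nb ε ν Ft) := by
  have hν' : ν * (2 + ν) ≠ 0 := by positivity
  have hψ : ∀ F, Ft ≤ F → F < Nb → psiSq Nb ε F = c := fun F hFt hFN =>
    psiSq_eq_of_eqOn_Ico hFN fun n hn => hconst n (hFt.trans (mem_Ico.mp hn).1)
      (by have := (mem_Ico.mp hn).2; omega)
  have hstep : ∀ F, Ft ≤ F → F + 1 ≤ Nb - 1 → LLhat Nb ε ν (F + 1) = LLhat Nb ε ν F :=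
    fun F hFt hF => LLhat_succ_eq_of_eq_psiSq (by omega) hν'
      (by rw [hψ F hFt (by omega), hψ (F + 1) (by omega) (by omega)])
      (by rw [hψ F hFt (by omega)]; exact hc.le)
      (by rw [hψ F hFt (by omega), hconst F hFt (by omega)])
  refine ⟨fun F hFt hF => ?_, fun F hFt hF => ?_⟩
  · obtain ⟨G, rfl⟩ : ∃ G, F = G + 1 := ⟨F - 1, by omega⟩
    exact hstep G (by omega) hF
  · induction F, hFt using Nat.le_induction with
    | base => rfl
    | succ F hFt ih => rw [hstep F hFt hF, ih (by omega)]

/-- If `ν ≥ 2`, `ε̄` is nonincreasing and constantly equal to some `c > 0` from index `F̃` on,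
then the simplified log-likelihood is constant beyond `F̃`:
`L̂L_F = L̂L_{F−1}` for `F̃ < F ≤ N_b − 1`, and consequently
`L̂L_F = L̂L_{F̃}` for all `F̃ ≤ F ≤ N_b − 1`. -/
theorem LLhat_constant_beyond_Ftilde
    (Nb : ℕ) (hNb : 2 ≤ Nb) (ν : ℝ) (hν : 2 ≤ ν)
    (ε : ℕ → ℝ) (hmono : ∀ i j : ℕ, i ≤ j → j ≤ Nb - 1 → ε j ≤ ε i)
    (Ft : ℕ) (hFt1 : 1 ≤ Ft) (hFt2 : Ft ≤ Nb - 1)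
    (c : ℝ) (hc : 0 < c) (hconst : ∀ n : ℕ, Ft ≤ n → n ≤ Nb - 1 → ε n = c) :
    (∀ F : ℕ, Ft < F → F ≤ Nb - 1 → LLhat Nb ε ν F = LLhat Nb ε ν (F - 1)) ∧
    (∀ F : ℕ, Ft ≤ F → F ≤ Nb - 1 → LLhat Nb ε ν F = LLhat Nb ε ν Ft) :=
  LLhat_constant_beyond_Ftilde_general Nb ν hν ε Ft c hc hconst
end

section
/- Let ν ≥ 1 be a real number, let m ≥ 1 be an integer, let a, b be real numbers with 0 < a ≤ b, and let e_1, …, e_m be nonnegative real numbers whose mean is a, i.e., Σ_{i=1}^{m} e_i = m·a. Then Σ_{i=1}^{m} [ (ν/2)·ln(b/a) + (e_i/2)·(1/b − 1/a) ] ≥ (m·(ν − 1)/2)·((b − a)/b) ≥ 0. -/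
open Finset

/-!
The summand is affine in `e i`, so the sum only sees the mean `a` of the `e i`; the noise terms
then add up to `m (a/b - 1)/2 = -m (b - a)/(2b)`, and `ln (b/a) ≥ 1 - a/b = (b - a)/b` bounds
the logarithmic terms from below by `m ν (b - a)/(2b)`.
-/

theorem Finset.sum_const_add_mul_eq_card_mul {ι R : Type*} [CommSemiring R] {s : Finset ι}
    {e : ι → R} {μ : R} (h : ∑ i ∈ s, e i = #s * μ) (c d : R) :
    ∑ i ∈ s, (c + e i * d) = #s * (c + μ * d) := by
  rw [sum_add_distrib, ← sum_mul, h, sum_const, nsmul_eq_mul]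
  ring

theorem sub_one_mul_sub_div_le_mul_log_div_add {ν a b : ℝ} (hν : 0 ≤ ν) (ha : 0 < a)
    (hb : 0 < b) :
    (ν - 1) * ((b - a) / b) ≤ ν * Real.log (b / a) + a * (1 / b - 1 / a) := by
  have hlog : (b - a) / b ≤ Real.log (b / a) := by
    simpa [inv_div, one_sub_div hb.ne'] using Real.one_sub_inv_le_log_of_pos (div_pos hb ha)
  have hnoise : a * (1 / b - 1 / a) = -((b - a) / b) := by
    field_simp
    ring
  rw [hnoise]
  linarith [mul_le_mul_of_nonneg_left hlog hν]

theorem noise_bin_lower_bound_general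
    (ν : ℝ) (hν : 1 ≤ ν) (m : ℕ)
    (a b : ℝ) (ha : 0 < a) (hab : a ≤ b)
    (e : ℕ → ℝ)
    (hsum : ∑ i ∈ Finset.range m, e i = (m : ℝ) * a) :
    ((m : ℝ) * (ν - 1) / 2) * ((b - a) / b) ≤
      ∑ i ∈ Finset.range m, ((ν / 2) * Real.log (b / a) + (e i / 2) * (1 / b - 1 / a)) ∧
    0 ≤ ((m : ℝ) * (ν - 1) / 2) * ((b - a) / b) := by
  have hb : 0 < b := ha.trans_le hab
  have hmean : ∑ i ∈ range m, e i = #(range m) * a := by rwa [card_range]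
  have hbin := sub_one_mul_sub_div_le_mul_log_div_add (ν := ν) (by linarith) ha hb
  have hν' : 0 ≤ ν - 1 := sub_nonneg.2 hν
  refine ⟨?_, mul_nonneg (by positivity) (div_nonneg (sub_nonneg.2 hab) hb.le)⟩
  calc ((m : ℝ) * (ν - 1) / 2) * ((b - a) / b)
      = m * ((ν - 1) * ((b - a) / b) / 2) := by ring
    _ ≤ m * ((ν * Real.log (b / a) + a * (1 / b - 1 / a)) / 2) := by gcongr
    _ = ∑ i ∈ range m, ((ν / 2) * Real.log (b / a) + e i * ((1 / b - 1 / a) / 2)) := by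
      rw [sum_const_add_mul_eq_card_mul hmean, card_range]
      ring
    _ = _ := sum_congr rfl fun i _ => by ring

/-- Abstract nonnegativity of the noise-bin contribution: for `ν ≥ 1`, an integer `m ≥ 1`,
reals `0 < a ≤ b`, and nonnegative `e_1, …, e_m` with mean `a` (i.e. `Σ e_i = m·a`), one has
`Σ_i [(ν/2)·ln(b/a) + (e_i/2)·(1/b − 1/a)] ≥ (m(ν−1)/2)·((b−a)/b) ≥ 0`. -/
theorem noise_bin_lower_bound
    (ν : ℝ) (hν : 1 ≤ ν) (m : ℕ) (hm : 1 ≤ m)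
    (a b : ℝ) (ha : 0 < a) (hab : a ≤ b)
    (e : ℕ → ℝ) (he : ∀ i ∈ Finset.range m, 0 ≤ e i)
    (hsum : ∑ i ∈ Finset.range m, e i = (m : ℝ) * a) :
    ((m : ℝ) * (ν - 1) / 2) * ((b - a) / b) ≤
      ∑ i ∈ Finset.range m, ((ν / 2) * Real.log (b / a) + (e i / 2) * (1 / b - 1 / a)) ∧
    0 ≤ ((m : ℝ) * (ν - 1) / 2) * ((b - a) / b) :=
  noise_bin_lower_bound_general ν hν m a b ha hab e hsum
end

section
/- Let N_b ≥ 2 be an integer, let ν ≥ 1 be a real number, let ε̄ = (ε̄_0, …, ε̄_{N_b−1}) be a nonincreasing vector of nonnegative real numbers, and let F be an integer with 1 ≤ F ≤ N_b − 1 such that ψ²_F > 0. Then the noise-bin contribution to the change in simplified log-likelihood is nonnegative: Σ_{n=F}^{N_b−1} [ (ν/2)·ln(ψ²_{F−1}/ψ²_F) + (ε̄_n/2)·(1/ψ²_{F−1} − 1/ψ²_F) ] ≥ 0. -/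
/-
Write `A = ψ²_{F-1}` and `B = ψ²_F`. Since `Σ_{n ≥ F} ε̄_n = (N_b - F) B`, the sum equals
`(N_b - F)/2 · (ν log (A/B) + B/A - 1)`. Monotonicity gives `ε̄_{F-1} ≥ B`, so `A`, a weighted
mean of `ε̄_{F-1}` and `B`, is at least `B`. Then `log (A/B) ≥ 0`, so `ν log (A/B) ≥ log (A/B)`,
and `log (A/B) ≥ 1 - B/A` is the elementary bound `log x ≥ 1 - 1/x`.
-/

open Finset

section PsiSq

variable {N : ℕ} {ε : ℕ → ℝ}

lemma sum_Ico_eq_mul_psiSq {F : ℕ} (hF : F < N) :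
    ∑ n ∈ Ico F N, ε n = ((N : ℝ) - F) * psiSq N ε F := by
  have hpos : (0 : ℝ) < (N : ℝ) - F := sub_pos.mpr (by exact_mod_cast hF)
  rw [psiSq]
  field_simp

lemma psiSq_le_of_forall_le {F : ℕ} {c : ℝ} (hF : F < N) (hc : ∀ n ∈ Ico F N, ε n ≤ c) :
    psiSq N ε F ≤ c := by
  have hpos : (0 : ℝ) < (N : ℝ) - F := sub_pos.mpr (by exact_mod_cast hF)
  have hsum : ∑ n ∈ Ico F N, ε n ≤ ((N : ℝ) - F) * c := by
    simpa [Nat.cast_sub hF.le] using sum_le_sum hc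
  rw [sum_Ico_eq_mul_psiSq hF] at hsum
  exact le_of_mul_le_mul_left hsum hpos

lemma psiSq_succ_le {k : ℕ} (hk : k + 1 < N) (hε : ∀ n ∈ Ico (k + 1) N, ε n ≤ ε k) :
    psiSq N ε (k + 1) ≤ psiSq N ε k := by
  set B := psiSq N ε (k + 1)
  have hB : B ≤ ε k := psiSq_le_of_forall_le hk hε
  have hpos : (0 : ℝ) < (N : ℝ) - (k + 1) := sub_pos.mpr (by exact_mod_cast hk)
  have hsplit : ((N : ℝ) - k) * psiSq N ε k = ε k + ((N : ℝ) - (k + 1)) * B := by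
    rw [← sum_Ico_eq_mul_psiSq (by omega), sum_eq_sum_Ico_succ_bot (by omega),
      sum_Ico_eq_mul_psiSq hk, Nat.cast_succ]
  have : ((N : ℝ) - k) * B ≤ ((N : ℝ) - k) * psiSq N ε k := by
    rw [hsplit]
    linarith
  exact le_of_mul_le_mul_left this (by linarith)

end PsiSq

lemma mul_log_div_add_div_sub_one_nonneg {a b ν : ℝ} (hb : 0 < b) (hba : b ≤ a) (hν : 1 ≤ ν) :
    0 ≤ ν * Real.log (a / b) + (b / a - 1) := by
  have hlog : 0 ≤ Real.log (a / b) := Real.log_nonneg ((one_le_div hb).mpr hba)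
  have hinv : 1 - b / a ≤ Real.log (a / b) := by
    simpa using Real.one_sub_inv_le_log_of_pos (div_pos (hb.trans_le hba) hb)
  nlinarith

lemma sum_Ico_log_div_add_mul_inv_sub_inv {N F : ℕ} {ε : ℕ → ℝ} {A B ν : ℝ} (hF : F < N)
    (hB : B = psiSq N ε F) (hB0 : B ≠ 0) :
    ∑ n ∈ Ico F N, ((ν / 2) * Real.log (A / B) + (ε n / 2) * (1 / A - 1 / B))
      = ((N : ℝ) - F) / 2 * (ν * Real.log (A / B) + (B / A - 1)) := by
  rw [sum_add_distrib, sum_const, Nat.card_Ico, nsmul_eq_mul, Nat.cast_sub hF.le, ← sum_mul,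
    ← sum_div, sum_Ico_eq_mul_psiSq hF, ← hB]
  field_simp

theorem noise_bin_contribution_nonneg_general
    (Nb : ℕ) (ν : ℝ) (hν : 1 ≤ ν)
    (ε : ℕ → ℝ)
    (hmono : ∀ i j : ℕ, i ≤ j → j ≤ Nb - 1 → ε j ≤ ε i)
    (F : ℕ) (hF1 : 1 ≤ F) (hF2 : F ≤ Nb - 1)
    (hψF : 0 < psiSq Nb ε F) :
    0 ≤ ∑ n ∈ Finset.Ico F Nb,
        ((ν / 2) * Real.log (psiSq Nb ε (F - 1) / psiSq Nb ε F)
          + (ε n / 2) * (1 / psiSq Nb ε (F - 1) - 1 / psiSq Nb ε F)) := by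
  have hFN : F < Nb := by omega
  have hψ_le : psiSq Nb ε F ≤ psiSq Nb ε (F - 1) := by
    obtain ⟨k, rfl⟩ : ∃ k, F = k + 1 := ⟨F - 1, by omega⟩
    refine psiSq_succ_le hFN fun n hn => ?_
    rw [mem_Ico] at hn
    exact hmono k n (by omega) (by omega)
  rw [sum_Ico_log_div_add_mul_inv_sub_inv hFN rfl hψF.ne']
  have hpos : (0 : ℝ) ≤ ((Nb : ℝ) - F) / 2 := by
    have : (F : ℝ) < Nb := by exact_mod_cast hFN
    linarith
  exact mul_nonneg hpos (mul_log_div_add_div_sub_one_nonneg hψF hψ_le hν)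

/-- For `ν ≥ 1`, a nonincreasing vector of nonnegative reals, and `1 ≤ F ≤ N_b − 1` with
`ψ²_F > 0`, the noise-bin contribution to the change in simplified log-likelihood is
nonnegative: `Σ_{n=F}^{N_b−1} [(ν/2)·ln(ψ²_{F−1}/ψ²_F) + (ε̄_n/2)·(1/ψ²_{F−1} − 1/ψ²_F)] ≥ 0`. -/
theorem noise_bin_contribution_nonneg
    (Nb : ℕ) (hNb : 2 ≤ Nb) (ν : ℝ) (hν : 1 ≤ ν)
    (ε : ℕ → ℝ) (hεnonneg : ∀ n : ℕ, 0 ≤ ε n)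
    (hmono : ∀ i j : ℕ, i ≤ j → j ≤ Nb - 1 → ε j ≤ ε i)
    (F : ℕ) (hF1 : 1 ≤ F) (hF2 : F ≤ Nb - 1)
    (hψF : 0 < psiSq Nb ε F) :
    0 ≤ ∑ n ∈ Finset.Ico F Nb,
        ((ν / 2) * Real.log (psiSq Nb ε (F - 1) / psiSq Nb ε F)
          + (ε n / 2) * (1 / psiSq Nb ε (F - 1) - 1 / psiSq Nb ε F)) :=
  noise_bin_contribution_nonneg_general Nb ν hν ε hmono F hF1 hF2 hψF
end
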